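/- If p/q is a convergent of the regular continued fraction expansion of an irrational α ∈ (0,1), then p/q is a best approximation of the second kind: for every rational p'/q' ≠ p/q with 1 ≤ q' ≤ q, one has |q·α − p| < |q'·α − p'|. -/

import Mathlib

/-- The Gauss map `T_G(0) = 0`, `T_G(x) = {1/x}` for `x ≠ 0`. -/
noncomputable def TG (x : ℝ) : ℝ := if x = 0 then 0 else Int.fract (1 / x)

/-- `cfA x n = a_{n+1}(x) = ⌊1 / T_G^n(x)⌋`, the continued fraction digits of `x`. -/
noncomputable def cfA (x : ℝ) (n : ℕ) : ℤ := ⌊1 / (TG^[n] x)⌋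

/-- `cfP x (n+1) = p_n(x)` : numerators of the convergents, with the index shift
`cfP x 0 = p_{-1} = 1`, `cfP x 1 = p_0 = 0`, and `p_{n+1} = a_{n+1} p_n + p_{n-1}`. -/
noncomputable def cfP (x : ℝ) : ℕ → ℤ
  | 0 => 1
  | 1 => 0
  | (n + 2) => cfA x n * cfP x (n + 1) + cfP x n

/-- `cfQ x (n+1) = q_n(x)` : denominators of the convergents, with the index shift
`cfQ x 0 = q_{-1} = 0`, `cfQ x 1 = q_0 = 1`, and `q_{n+1} = a_{n+1} q_n + q_{n-1}`. -/
noncomputable def cfQ (x : ℝ) : ℕ → ℤ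
  | 0 => 0
  | 1 => 1
  | (n + 2) => cfA x n * cfQ x (n + 1) + cfQ x n

/-- The approximation coefficients `Θ_n(x) = q_n² · |x − p_n/q_n|`. -/
noncomputable def Theta (x : ℝ) (n : ℕ) : ℝ :=
  (cfQ x (n + 1) : ℝ) ^ 2 * |x - (cfP x (n + 1) : ℝ) / (cfQ x (n + 1) : ℝ)|

lemma TG_step (x : ℝ) (hx : Irrational x) :
    Irrational (TG x) ∧ TG x ∈ Set.Ioo (0:ℝ) 1 := by
  have hx0 : x ≠ 0 := hx.ne_zero
  have hfr : TG x = Int.fract (1/x) := by rw [TG, if_neg hx0]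
  have h1 : Irrational (1 / x) := by simpa [one_div] using hx.inv
  have h2 : Irrational (TG x) := by
    rw [hfr, Int.fract]
    exact h1.sub_intCast _
  exact ⟨h2, (hfr ▸ Int.fract_nonneg (1/x)).lt_of_ne (Ne.symm h2.ne_zero),
    hfr ▸ Int.fract_lt_one _⟩

lemma iter_prop (α : ℝ) (hα : α ∈ Set.Ioo (0:ℝ) 1) (hirr : Irrational α) (n : ℕ) :
    Irrational (TG^[n] α) ∧ TG^[n] α ∈ Set.Ioo (0:ℝ) 1 := by
  induction n with
  | zero => exact ⟨hirr, hα⟩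
  | succ n ih =>
    rw [Function.iterate_succ_apply']
    exact TG_step _ ih.1

lemma cfA_ge_one (α : ℝ) (hα : α ∈ Set.Ioo (0:ℝ) 1) (hirr : Irrational α) (n : ℕ) :
    1 ≤ cfA α n := by
  obtain ⟨-, ht0, ht1⟩ := iter_prop α hα hirr n
  rw [cfA, Int.le_floor]
  push_cast
  exact le_of_lt (one_lt_one_div ht0 ht1)

lemma TG_iter_succ (α : ℝ) (hα : α ∈ Set.Ioo (0:ℝ) 1) (hirr : Irrational α) (n : ℕ) :
    TG^[n+1] α = 1 / TG^[n] α - (cfA α n : ℝ) := by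
  obtain ⟨hi, ht0, -⟩ := iter_prop α hα hirr n
  rw [Function.iterate_succ_apply', TG, if_neg hi.ne_zero, Int.fract, cfA]

/-- product of the first `n` iterates -/
noncomputable def Pc (α : ℝ) (n : ℕ) : ℝ := ∏ i ∈ Finset.range n, TG^[i] α

lemma Pc_pos (α : ℝ) (hα : α ∈ Set.Ioo (0:ℝ) 1) (hirr : Irrational α) (n : ℕ) :
    0 < Pc α n :=
  Finset.prod_pos fun i _ => (iter_prop α hα hirr i).2.1

lemma Pc_succ (α : ℝ) (n : ℕ) : Pc α (n+1) = Pc α n * TG^[n] α :=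
  Finset.prod_range_succ _ _

lemma Pc_decr (α : ℝ) (hα : α ∈ Set.Ioo (0:ℝ) 1) (hirr : Irrational α) (n : ℕ) :
    Pc α (n+1) < Pc α n := by
  rw [Pc_succ]
  nlinarith [Pc_pos α hα hirr n, (iter_prop α hα hirr n).2.2, (iter_prop α hα hirr n).2.1]

/-- key formula for the error terms -/
lemma E_eq (α : ℝ) (hα : α ∈ Set.Ioo (0:ℝ) 1) (hirr : Irrational α) :
    ∀ n : ℕ, (cfQ α n : ℝ) * α - (cfP α n : ℝ) = (-1)^(n+1) * Pc α n := by
  have key : ∀ n, (∀ m ≤ n, (cfQ α m : ℝ) * α - (cfP α m : ℝ) = (-1)^(m+1) * Pc α m) := by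
    intro n
    induction n with
    | zero =>
      intro m hm
      interval_cases m
      simp [cfQ, cfP, Pc]
    | succ n ih =>
      intro m hm
      rcases hm.lt_or_eq with h | h
      · exact ih m (Nat.lt_succ_iff.mp h)
      subst h
      match n, ih with
      | 0, ih => simp [cfQ, cfP, Pc]
      | (k+1), ih =>
        have h1 := ih (k+1) le_rfl
        have h0 := ih k (Nat.le_succ k)
        have hstep := TG_iter_succ α hα hirr k
        have htk : TG^[k] α ≠ 0 := (iter_prop α hα hirr k).1.ne_zero
        have hrel : (cfA α k : ℝ) * TG^[k] α = 1 - TG^[k] α * TG^[k+1] α := by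
          rw [hstep]
          field_simp
          ring
        show (cfQ α (k+2) : ℝ) * α - (cfP α (k+2) : ℝ) = (-1)^(k+3) * Pc α (k+2)
        rw [cfQ, cfP]
        push_cast
        have : ((cfA α k : ℝ) * (cfQ α (k+1) : ℝ) + (cfQ α k : ℝ)) * α -
            ((cfA α k : ℝ) * (cfP α (k+1) : ℝ) + (cfP α k : ℝ))
            = (cfA α k : ℝ) * ((cfQ α (k+1) : ℝ) * α - (cfP α (k+1) : ℝ))
              + ((cfQ α k : ℝ) * α - (cfP α k : ℝ)) := by ring
        rw [this, h1, h0, Pc_succ, Pc_succ]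
        linear_combination (-((-1:ℝ))^(k+1) * Pc α k) * hrel + ((-1:ℝ))^k * TG^[k+1] α * Pc_succ α k
  exact fun n => key n n le_rfl

lemma cfQ_nonneg (α : ℝ) (hα : α ∈ Set.Ioo (0:ℝ) 1) (hirr : Irrational α) :
    ∀ n, 0 ≤ cfQ α n ∧ (1 ≤ n → 1 ≤ cfQ α n) := by
  intro n
  induction n using Nat.strong_induction_on with
  | _ n ih =>
    match n with
    | 0 => simp [cfQ]
    | 1 => simp [cfQ]
    | (k+2) =>
      have h1 := ih (k+1) (by omega)
      have h0 := ih k (by omega)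
      have ha := cfA_ge_one α hα hirr k
      constructor
      · show 0 ≤ cfA α k * cfQ α (k+1) + cfQ α k
        nlinarith [h1.2 (by omega), h0.1]
      · intro _
        show 1 ≤ cfA α k * cfQ α (k+1) + cfQ α k
        nlinarith [h1.2 (by omega), h0.1]

lemma det_eq (α : ℝ) (n : ℕ) :
    cfP α (n+1) * cfQ α n - cfP α n * cfQ α (n+1) = (-1)^(n+1) := by
  induction n with
  | zero => simp [cfP, cfQ]
  | succ k ih =>
    show cfP α (k+2) * cfQ α (k+1) - cfP α (k+1) * cfQ α (k+2) = (-1)^(k+2)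
    rw [cfP, cfQ]
    have : (cfA α k * cfP α (k+1) + cfP α k) * cfQ α (k+1) -
        cfP α (k+1) * (cfA α k * cfQ α (k+1) + cfQ α k)
        = -(cfP α (k+1) * cfQ α k - cfP α k * cfQ α (k+1)) := by ring
    rw [this, ih]
    ring

lemma abs_add_ge (a b : ℝ) (hab : 0 ≤ a * b) : |b| ≤ |a + b| := by
  rcases le_or_gt 0 a with ha | ha <;> rcases le_or_gt 0 b with hb | hb <;>
    rcases abs_cases b with ⟨h1, h2⟩ | ⟨h1, h2⟩ <;>
    rcases abs_cases (a+b) with ⟨h3, h4⟩ | ⟨h3, h4⟩ <;> nlinarith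

/-- Convergents are best approximations of the second kind: if `p_n/q_n` is a
convergent of the irrational `α ∈ (0,1)` (with `n ≥ 1`), then for every rational
`p'/q' ≠ p_n/q_n` with `1 ≤ q' ≤ q_n` one has `|q_n·α − p_n| < |q'·α − p'|`. -/
theorem convergent_best_approx (α : ℝ) (hα : α ∈ Set.Ioo (0 : ℝ) 1) (hirr : Irrational α)
    (n : ℕ) (hn : 1 ≤ n) (p' q' : ℤ) (hq1 : 1 ≤ q') (hq2 : q' ≤ cfQ α (n + 1))
    (hne : (p' : ℝ) / (q' : ℝ) ≠ (cfP α (n + 1) : ℝ) / (cfQ α (n + 1) : ℝ)) :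
    |(cfQ α (n + 1) : ℝ) * α - (cfP α (n + 1) : ℝ)| < |(q' : ℝ) * α - (p' : ℝ)| := by
  set P1 := cfP α (n+1) with hP1
  set P0 := cfP α n with hP0
  set Q1 := cfQ α (n+1) with hQ1
  set Q0 := cfQ α n with hQ0
  have hdet : P1 * Q0 - P0 * Q1 = (-1)^(n+1) := det_eq α n
  set D : ℤ := (-1)^(n+1) with hD
  have hDD : D * D = 1 := by
    rw [hD, ← pow_add]
    exact Even.neg_one_pow ⟨n+1, rfl⟩
  set x : ℤ := D * (Q0 * p' - P0 * q') with hx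
  set y : ℤ := D * (P1 * q' - Q1 * p') with hy
  have hxp : x * P1 + y * P0 = p' := by
    have : x * P1 + y * P0 = (D * (P1 * Q0 - P0 * Q1)) * p' := by rw [hx, hy]; ring
    rw [this, hdet, hDD, one_mul]
  have hxq : x * Q1 + y * Q0 = q' := by
    have : x * Q1 + y * Q0 = (D * (P1 * Q0 - P0 * Q1)) * q' := by rw [hx, hy]; ring
    rw [this, hdet, hDD, one_mul]
  clear_value x y D
  clear hx hy hD hdet hDD
  -- error terms
  have hE1 : (Q1 : ℝ) * α - (P1 : ℝ) = (-1)^(n+2) * Pc α (n+1) := E_eq α hα hirr (n+1)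
  have hE0 : (Q0 : ℝ) * α - (P0 : ℝ) = (-1)^(n+1) * Pc α n := E_eq α hα hirr n
  have hPc1 : 0 < Pc α (n+1) := Pc_pos α hα hirr (n+1)
  have hPc0 : 0 < Pc α n := Pc_pos α hα hirr n
  have hPlt : Pc α (n+1) < Pc α n := Pc_decr α hα hirr n
  have habs1 : |(Q1 : ℝ) * α - (P1 : ℝ)| = Pc α (n+1) := by
    rw [hE1, abs_mul, abs_pow, abs_neg, abs_one, one_pow, one_mul, abs_of_pos hPc1]
  have hQ1pos : 1 ≤ Q1 := (cfQ_nonneg α hα hirr (n+1)).2 (by omega)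
  have hQ0pos : 1 ≤ Q0 := (cfQ_nonneg α hα hirr n).2 hn
  -- decomposition of q'α - p'
  have hdec : (q' : ℝ) * α - (p' : ℝ)
      = (x : ℝ) * ((Q1 : ℝ) * α - (P1 : ℝ)) + (y : ℝ) * ((Q0 : ℝ) * α - (P0 : ℝ)) := by
    have hxp' : (x : ℝ) * P1 + (y : ℝ) * P0 = p' := by exact_mod_cast congrArg (Int.cast : ℤ → ℝ) hxp
    have hxq' : (x : ℝ) * Q1 + (y : ℝ) * Q0 = q' := by exact_mod_cast congrArg (Int.cast : ℤ → ℝ) hxq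
    rw [← hxp', ← hxq']
    ring
  rw [habs1, hdec]
  by_cases hy0 : y = 0
  · -- then x = 1, contradiction with hne
    exfalso
    have hq'x : x * Q1 = q' := by rw [← hxq, hy0]; ring
    have hp'x : x * P1 = p' := by rw [← hxp, hy0]; ring
    have hx1 : x = 1 := by nlinarith [hq'x, hq2, hq1, hQ1pos]
    apply hne
    rw [← hp'x, ← hq'x, hx1]
    simp
  by_cases hx0 : x = 0
  · -- q'α - p' = y * E0
    have hyge : 1 ≤ |y| := by have := abs_pos.mpr hy0; omega
    rw [hx0]
    push_cast
    rw [zero_mul, zero_add, abs_mul, hE0]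
    have : |(-1:ℝ)^(n+1) * Pc α n| = Pc α n := by
      rw [abs_mul, abs_pow, abs_neg, abs_one, one_pow, one_mul, abs_of_pos hPc0]
    rw [this]
    have : (1:ℝ) ≤ |(y:ℝ)| := by exact_mod_cast hyge
    nlinarith
  · -- x ≠ 0, y ≠ 0 : opposite signs
    have hxy : x * y < 0 := by
      rcases lt_trichotomy x 0 with h1 | h1 | h1 <;> rcases lt_trichotomy y 0 with h2 | h2 | h2
      · exfalso
        have hx1 : x ≤ -1 := by omega
        have hy1 : y ≤ -1 := by omega
        nlinarith [hxq, hq1, hQ1pos, hQ0pos, hx1, hy1]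
      · exact absurd h2 hy0
      · exact mul_neg_of_neg_of_pos h1 h2
      · exact absurd h1 hx0
      · exact absurd h1 hx0
      · exact absurd h1 hx0
      · exact mul_neg_of_pos_of_neg h1 h2
      · exact absurd h2 hy0
      · exfalso
        have hx1 : 1 ≤ x := by omega
        have hy1 : 1 ≤ y := by omega
        nlinarith [hxq, hq2, hQ0pos, hQ1pos, hx1, hy1]
    have hyge : 1 ≤ |y| := by have := abs_pos.mpr hy0; omega
    obtain ⟨s, hss, hsE1, hsE0⟩ : ∃ s : ℝ, s * s = 1 ∧
        (Q1:ℝ)*α - (P1:ℝ) = -s * Pc α (n+1) ∧ (Q0:ℝ)*α - (P0:ℝ) = s * Pc α n := by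
      refine ⟨(-1:ℝ)^(n+1), ?_, ?_, hE0⟩
      · rw [← pow_add]; exact Even.neg_one_pow ⟨n+1, rfl⟩
      · rw [hE1]; ring
    have hs_abs : |s| = 1 := by
      have h1 : |s| * |s| = 1 := by rw [← abs_mul, hss, abs_one]
      nlinarith [abs_nonneg s]
    have hab : 0 ≤ ((x:ℝ) * ((Q1:ℝ)*α - (P1:ℝ))) * ((y:ℝ) * ((Q0:ℝ)*α - (P0:ℝ))) := by
      rw [hsE1, hsE0]
      have hxy' : (x:ℝ) * (y:ℝ) < 0 := by exact_mod_cast hxy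
      have heq : ((x:ℝ) * (-s * Pc α (n+1))) * ((y:ℝ) * (s * Pc α n))
          = -((x:ℝ) * (y:ℝ)) * (Pc α (n+1) * Pc α n) * (s * s) := by ring
      rw [heq, hss, mul_one]
      exact mul_nonneg (by linarith) (mul_pos hPc1 hPc0).le
    have h2 := abs_add_ge _ _ hab
    have h3 : Pc α n ≤ |(y:ℝ) * ((Q0:ℝ)*α - (P0:ℝ))| := by
      rw [abs_mul, hsE0, abs_mul, hs_abs, one_mul, abs_of_pos hPc0]
      have hy' : (1:ℝ) ≤ |(y:ℝ)| := by exact_mod_cast hyge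
      nlinarith
    calc Pc α (n+1) < Pc α n := hPlt
      _ ≤ _ := h3.trans h2
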